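/- arXiv:math/0405216 — 2 statements merged into one kernel-verified Lean document; each statement's English description precedes it below -/
import Mathlib

section
/- Let R be a unital associative ring, M a nonzero left R-module, Ω an infinite set, N = ∏_{i∈Ω} M, and E = End_R(N). Suppose U ⊆ E has a full moiety Σ ⊆ Ω. Then there exist elements x, y ∈ E such that E = yUy + yUyx + xyUy + xyUyx (where for subsets A, B ⊆ E, AB denotes the set of products and A + B the set of sums, and yUy = {yuy : u ∈ U}, etc.). -/
open Pointwise Cardinal

/-- The submodule of the direct product `∀ i : Ω, M` consisting of elements supported on `S`. -/
def suppSubmodule (R : Type*) [Ring R] (M : Type*) [AddCommGroup M] [Module R M]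
    (Ω : Type*) (S : Set Ω) : Submodule R (Ω → M) where
  carrier := {x | ∀ i ∉ S, x i = 0}
  add_mem' := fun {a b} ha hb i hi => by simp [ha i hi, hb i hi]
  zero_mem' := fun i _ => rfl
  smul_mem' := fun r a ha i hi => by simp [Pi.smul_apply, ha i hi]

/-- `S ⊆ Ω` is full with respect to `U ⊆ E`: every endomorphism of `M^S` is induced by
restriction of a member of `U` carrying `M^S` into `M^S` and `M^{Ω∖S}` into `M^{Ω∖S}`. -/
def IsFull (R : Type*) [Ring R] (M : Type*) [AddCommGroup M] [Module R M]
    (Ω : Type*) (U : Set (Module.End R (Ω → M))) (S : Set Ω) : Prop :=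
  ∀ g : Module.End R (suppSubmodule R M Ω S), ∃ f ∈ U,
    (suppSubmodule R M Ω S).map f ≤ suppSubmodule R M Ω S ∧
    (suppSubmodule R M Ω Sᶜ).map f ≤ suppSubmodule R M Ω Sᶜ ∧
    ∀ v : suppSubmodule R M Ω S, f (v : Ω → M) = (g v : Ω → M)

theorem stmt1 (R : Type*) [Ring R] (M : Type*) [AddCommGroup M] [Module R M]
    [Nontrivial M] (Ω : Type*) [Infinite Ω]
    (U : Set (Module.End R (Ω → M))) (S : Set Ω)
    (hmoiety : #(↥S) = #Ω ∧ #(↥(Sᶜ : Set Ω)) = #Ω)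
    (hfull : IsFull R M Ω U S) :
    ∃ x y : Module.End R (Ω → M),
      ({y} * U * {y} + {y} * U * {y} * {x} + {x} * ({y} * U * {y})
        + {x} * ({y} * U * {y}) * {x} : Set (Module.End R (Ω → M))) = Set.univ := by
  classical
  obtain ⟨h1, h2⟩ := hmoiety
  obtain ⟨e⟩ : Nonempty (↥S ≃ ↥(Sᶜ : Set Ω)) := by
    rw [← Cardinal.eq, h1, h2]
  -- the involution of Ω swapping S and Sᶜ
  set σ : Ω → Ω := fun i => if h : i ∈ S then (e ⟨i, h⟩ : Ω) else (e.symm ⟨i, h⟩ : Ω) with hσ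
  have hσS : ∀ i, i ∈ S → σ i ∉ S := by
    intro i hi
    simp only [hσ, dif_pos hi]
    exact (e ⟨i, hi⟩).2
  have hσC : ∀ i, i ∉ S → σ i ∈ S := by
    intro i hi
    simp only [hσ, dif_neg hi]
    exact (e.symm ⟨i, hi⟩).2
  have hσpos : ∀ i (h : i ∈ S), σ i = (e ⟨i, h⟩ : Ω) := by
    intro i h; simp only [hσ, dif_pos h]
  have hσneg : ∀ i (h : i ∉ S), σ i = (e.symm ⟨i, h⟩ : Ω) := by
    intro i h; simp only [hσ, dif_neg h]
  have hσσ : ∀ i, σ (σ i) = i := by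
    intro i
    by_cases hi : i ∈ S
    · have h2 := hσS i hi
      rw [hσneg _ h2]
      have hv : (⟨σ i, h2⟩ : ↥(Sᶜ : Set Ω)) = e ⟨i, hi⟩ := Subtype.ext (hσpos i hi)
      rw [hv, Equiv.symm_apply_apply]
    · have h2 := hσC i hi
      rw [hσpos _ h2]
      have hv : (⟨σ i, h2⟩ : ↥S) = e.symm ⟨i, hi⟩ := Subtype.ext (hσneg i hi)
      rw [hv, Equiv.apply_symm_apply]
  -- the projection onto M^S and the swap endomorphism
  set p : Module.End R (Ω → M) :=
    { toFun := fun n i => if i ∈ S then n i else 0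
      map_add' := by intro a b; funext i; by_cases h : i ∈ S <;> simp [h]
      map_smul' := by intro r a; funext i; by_cases h : i ∈ S <;> simp [h] } with hp
  set x : Module.End R (Ω → M) :=
    { toFun := fun n i => n (σ i)
      map_add' := by intro a b; rfl
      map_smul' := by intro r a; rfl } with hxdef
  have hpapp : ∀ n i, p n i = if i ∈ S then n i else 0 := fun n i => rfl
  have hxapp : ∀ n i, x n i = n (σ i) := fun n i => rfl
  have hp2 : p * p = p := by
    apply LinearMap.ext; intro n
    funext i
    simp only [Module.End.mul_apply, hpapp]
    by_cases h : i ∈ S <;> simp [h]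
  have hq : x * p * x = 1 - p := by
    apply LinearMap.ext; intro n
    funext i
    simp only [Module.End.mul_apply, LinearMap.sub_apply, Module.End.one_apply,
      Pi.sub_apply, hpapp, hxapp]
    by_cases h : i ∈ S
    · rw [if_neg (hσS i h), if_pos h]
      simp
    · rw [if_pos (hσC i h), if_neg h, hσσ]
      simp
  have hpmem : ∀ n, p n ∈ suppSubmodule R M Ω S := by
    intro n i hi
    exact if_neg hi
  -- key consequence of fullness
  have key : ∀ s : Module.End R (Ω → M), ∃ u ∈ U, p * u * p = p * s * p := by
    intro s
    set A := suppSubmodule R M Ω S with hAdef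
    let g : Module.End R A :=
      LinearMap.codRestrict A ((p ∘ₗ s) ∘ₗ A.subtype) (fun v => hpmem _)
    obtain ⟨u, hu, -, -, huv⟩ := hfull g
    refine ⟨u, hu, ?_⟩
    apply LinearMap.ext; intro n
    have h1 := huv ⟨p n, hpmem n⟩
    simp only [Module.End.mul_apply]
    rw [h1]
    have : (g ⟨p n, hpmem n⟩ : Ω → M) = p (s (p n)) := rfl
    rw [this]
    have h2 := DFunLike.congr_fun hp2 (s (p n))
    simpa using h2
  refine ⟨x, p, ?_⟩
  apply Set.eq_univ_iff_forall.mpr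
  intro t
  obtain ⟨u₁, hu₁, he₁⟩ := key t
  obtain ⟨u₂, hu₂, he₂⟩ := key (t * x)
  obtain ⟨u₃, hu₃, he₃⟩ := key (x * t)
  obtain ⟨u₄, hu₄, he₄⟩ := key (x * t * x)
  have hmain : t = (p * u₁ * p) + (p * u₂ * p) * x + x * (p * u₃ * p)
      + (x * (p * u₄ * p)) * x := by
    rw [he₁, he₂, he₃, he₄]
    have hpq : p + x * p * x = 1 := by rw [hq]; abel
    have hid : (p + x * p * x) * t * (p + x * p * x) = t := by rw [hpq]; simp
    calc t = (p + x * p * x) * t * (p + x * p * x) := hid.symm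
      _ = p * t * p + (p * (t * x) * p) * x + x * (p * (x * t) * p)
          + (x * (p * (x * t * x) * p)) * x := by noncomm_ring
  have hm1 : p * u₁ * p ∈ ({p} : Set (Module.End R (Ω → M))) * U * {p} :=
    Set.mul_mem_mul (Set.mul_mem_mul (Set.mem_singleton p) hu₁) (Set.mem_singleton p)
  have hm2 : (p * u₂ * p) * x ∈ ({p} : Set (Module.End R (Ω → M))) * U * {p} * {x} :=
    Set.mul_mem_mul (Set.mul_mem_mul (Set.mul_mem_mul (Set.mem_singleton p) hu₂)
      (Set.mem_singleton p)) (Set.mem_singleton x)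
  have hm3 : x * (p * u₃ * p) ∈ ({x} : Set (Module.End R (Ω → M))) * ({p} * U * {p}) :=
    Set.mul_mem_mul (Set.mem_singleton x)
      (Set.mul_mem_mul (Set.mul_mem_mul (Set.mem_singleton p) hu₃) (Set.mem_singleton p))
  have hm4 : (x * (p * u₄ * p)) * x
      ∈ ({x} : Set (Module.End R (Ω → M))) * ({p} * U * {p}) * {x} :=
    Set.mul_mem_mul (Set.mul_mem_mul (Set.mem_singleton x)
      (Set.mul_mem_mul (Set.mul_mem_mul (Set.mem_singleton p) hu₄) (Set.mem_singleton p)))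
      (Set.mem_singleton x)
  rw [hmain]
  exact Set.add_mem_add (Set.add_mem_add (Set.add_mem_add hm1 hm2) hm3) hm4
end

section
/- Let R be a unital associative ring, M a nonzero left R-module, Ω an infinite set, N = ∏_{i∈Ω} M, and E = End_R(N). Let (U_i)_{i∈I} be any family of subsets of E such that ⋃_{i∈I} U_i = E and |I| ≤ |Ω|. Then Ω contains a moiety which is full with respect to some U_i. -/
open Pointwise Cardinal

universe u v

open scoped Classical

lemma mem_suppSubmodule {R : Type*} [Ring R] {M : Type*} [AddCommGroup M] [Module R M]
    {Ω : Type*} {S : Set Ω} {x : Ω → M} :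
    x ∈ suppSubmodule R M Ω S ↔ ∀ i ∉ S, x i = 0 := Iff.rfl

/-- Projection onto the coordinates in `S`. -/
noncomputable def projL (R : Type*) [Ring R] (M : Type*) [AddCommGroup M] [Module R M]
    (Ω : Type*) (S : Set Ω) : (Ω → M) →ₗ[R] suppSubmodule R M Ω S where
  toFun x := ⟨fun ω => if ω ∈ S then x ω else 0, fun i hi => if_neg hi⟩
  map_add' x y := by
    apply Subtype.ext; funext ω; by_cases h : ω ∈ S <;> simp [h]
  map_smul' r x := by
    apply Subtype.ext; funext ω; by_cases h : ω ∈ S <;> simp [h]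

lemma projL_apply {R : Type*} [Ring R] {M : Type*} [AddCommGroup M] [Module R M]
    {Ω : Type*} (S : Set Ω) (x : Ω → M) (ω : Ω) :
    (projL R M Ω S x : Ω → M) ω = if ω ∈ S then x ω else 0 := rfl

theorem stmt3 (R : Type*) [Ring R] (M : Type*) [AddCommGroup M] [Module R M]
    [Nontrivial M] (Ω : Type u) [Infinite Ω] (I : Type v)
    (U : I → Set (Module.End R (Ω → M)))
    (hunion : (⋃ i : I, U i) = Set.univ)
    (hcard : Cardinal.lift.{u} #I ≤ Cardinal.lift.{v} #Ω) :
    ∃ (i : I) (S : Set Ω), (#(↥S) = #Ω ∧ #(↥(Sᶜ : Set Ω)) = #Ω) ∧ IsFull R M Ω (U i) S := by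
  classical
  obtain ⟨j⟩ : Nonempty (I ↪ Ω) := Cardinal.lift_mk_le'.mp hcard
  obtain ⟨e⟩ : Nonempty (Ω ≃ Ω × Ω) := by
    rw [← Cardinal.eq, Cardinal.mk_prod, Cardinal.lift_id,
      Cardinal.mul_eq_self (Cardinal.aleph0_le_mk Ω)]
  -- the pairwise disjoint moieties
  set T : I → Set Ω := fun i => {ω | (e ω).1 = j i} with hT
  have hdisj : ∀ {a b : I} {ω : Ω}, ω ∈ T a → ω ∈ T b → a = b := by
    intro a b ω ha hb
    exact j.injective (ha ▸ hb)
  -- cardinality of fibers of `(e ·).1`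
  have hfiber : ∀ a : Ω, #(↥{ω | (e ω).1 = a}) = #Ω := by
    intro a
    refine Cardinal.mk_congr ⟨fun ω => (e ω.1).2, fun m => ⟨e.symm (a, m), by simp⟩, ?_, ?_⟩
    · rintro ⟨ω, hω⟩
      apply Subtype.ext
      simp only []
      have : ((e ω).1, (e ω).2) = (a, (e ω).2) := by rw [hω]
      calc e.symm (a, (e ω).2) = e.symm ((e ω).1, (e ω).2) := by rw [this]
        _ = ω := by simp
    · intro m; simp
  have hTcard : ∀ i, #(↥(T i)) = #Ω := fun i => hfiber (j i)
  have hTccard : ∀ i, #(↥((T i)ᶜ)) = #Ω := by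
    intro i
    obtain ⟨a, ha⟩ := exists_ne (j i)
    refine le_antisymm (Cardinal.mk_set_le _) ?_
    rw [← hfiber a]
    apply Cardinal.mk_le_mk_of_subset
    intro ω hω
    simp only [Set.mem_compl_iff, hT, Set.mem_setOf_eq] at *
    rw [hω]; exact ha
  -- suppose no moiety is full
  by_contra hcon
  push_neg at hcon
  have hg : ∀ i, ∃ gi : Module.End R (suppSubmodule R M Ω (T i)),
      ∀ f ∈ U i, ¬ ((suppSubmodule R M Ω (T i)).map f ≤ suppSubmodule R M Ω (T i) ∧
        (suppSubmodule R M Ω (T i)ᶜ).map f ≤ suppSubmodule R M Ω (T i)ᶜ ∧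
        ∀ v : suppSubmodule R M Ω (T i), f (v : Ω → M) = (gi v : Ω → M)) := by
    intro i
    have h := hcon i (T i) ⟨hTcard i, hTccard i⟩
    unfold IsFull at h
    push_neg at h
    obtain ⟨gi, hgi⟩ := h
    refine ⟨gi, fun f hf hc => ?_⟩
    obtain ⟨h1, h2, h3⟩ := hc
    have := hgi f hf h1 h2
    obtain ⟨v, hv⟩ := this
    exact hv (h3 v)
  choose g hgspec using hg
  -- the combined endomorphism
  let F : Module.End R (Ω → M) :=
    { toFun := fun x ω =>
        if h : ∃ i, ω ∈ T i then
          ((g h.choose) (projL R M Ω (T h.choose) x) : Ω → M) ω else 0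
      map_add' := fun x y => by
        funext ω
        by_cases h : ∃ i, ω ∈ T i
        · simp [h, map_add]
        · simp [h]
      map_smul' := fun r x => by
        funext ω
        by_cases h : ∃ i, ω ∈ T i
        · simp [h, map_smul]
        · simp [h] }
  have hFapp : ∀ (x : Ω → M) (ω : Ω), F x ω =
      if h : ∃ i, ω ∈ T i then
        ((g h.choose) (projL R M Ω (T h.choose) x) : Ω → M) ω else 0 := fun _ _ => rfl
  have hchoose : ∀ {ω : Ω} {i : I} (h : ∃ i', ω ∈ T i'), ω ∈ T i → h.choose = i :=
    fun h hm => hdisj h.choose_spec hm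
  obtain ⟨i₁, hFU⟩ : ∃ i₁, F ∈ U i₁ := by
    have : F ∈ ⋃ i, U i := hunion ▸ Set.mem_univ F
    exact Set.mem_iUnion.mp this
  -- derive the contradiction
  refine hgspec i₁ F hFU ⟨?_, ?_, ?_⟩
  · -- maps M^S into M^S
    rintro y ⟨x, hx, rfl⟩
    intro ω hω
    rw [hFapp]
    split
    next h =>
      have hc : h.choose ≠ i₁ := fun hc => hω (hc ▸ h.choose_spec)
      have : projL R M Ω (T h.choose) x = 0 := by
        apply Subtype.ext; funext ω'
        rw [projL_apply]
        split
        next h' =>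
          exact hx ω' (fun hω' => hc (hdisj h' hω'))
        next => rfl
      rw [this, map_zero]; rfl
    next => rfl
  · -- maps M^{Sᶜ} into M^{Sᶜ}
    rintro y ⟨x, hx, rfl⟩
    intro ω hω
    have hωS : ω ∈ T i₁ := by simpa using hω
    rw [hFapp]
    have h : ∃ i, ω ∈ T i := ⟨i₁, hωS⟩
    rw [dif_pos h, hchoose h hωS]
    have : projL R M Ω (T i₁) x = 0 := by
      apply Subtype.ext; funext ω'
      rw [projL_apply]
      split
      next h' => exact hx ω' (by simpa using h')
      next => rfl
    rw [this, map_zero]; rfl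
  · -- induces g i₁ on M^S
    intro v
    funext ω
    rw [hFapp]
    by_cases hω : ω ∈ T i₁
    · have h : ∃ i, ω ∈ T i := ⟨i₁, hω⟩
      rw [dif_pos h, hchoose h hω]
      have : projL R M Ω (T i₁) (v : Ω → M) = v := by
        apply Subtype.ext; funext ω'
        rw [projL_apply]
        split
        next => rfl
        next h' => exact (v.2 ω' h').symm
      rw [this]
    · have hr : ((g i₁) v : Ω → M) ω = 0 := ((g i₁) v).2 ω hω
      rw [hr]
      split
      next h =>
        have hc : h.choose ≠ i₁ := fun hc => hω (hc ▸ h.choose_spec)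
        have : projL R M Ω (T h.choose) (v : Ω → M) = 0 := by
          apply Subtype.ext; funext ω'
          rw [projL_apply]
          split
          next h' => exact v.2 ω' (fun hω' => hc (hdisj h' hω'))
          next => rfl
        rw [this, map_zero]; rfl
      next => rfl
end
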